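/- Let $\{a_n\}_{n\ge 0}$ be a decreasing sequence of nonnegative real numbers with $a_0 \le U$ for some $U > 0$, satisfying $a_n \le a_{n-1}(1 - a_{n-1}/U)$ for all $n > 0$. Then $a_n \le U/(n+1)$ for all $n \ge 0$. -/

import Mathlib

/- Induction on `n`, one step being: if `x ≤ U / m` then `x * (1 - x / U) ≤ U / (m + 1)`.
Either `x` is already below `U / (m + 1)`, and the logistic map `x ↦ x * (1 - x / U)` only
decreases it, or `x` lies in `(U / (m + 1), U / m]`, where `(m x - U) ((m + 1) x - U) ≤ 0`
forces the bound. -/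

lemma mul_one_sub_div_le_self (U x : ℝ) (hU : 0 < U) : x * (1 - x / U) ≤ x := by
  have : 0 ≤ x * (x / U) := by rw [← mul_div_assoc]; exact div_nonneg (mul_self_nonneg x) hU.le
  linarith [mul_one_sub x (x / U)]

lemma mul_one_sub_div_le_div_add_one {U m x : ℝ} (hU : 0 < U) (hm : 0 < m) (hx : x ≤ U / m) :
    x * (1 - x / U) ≤ U / (m + 1) := by
  rcases le_or_gt x (U / (m + 1)) with hsmall | hlarge
  · exact (mul_one_sub_div_le_self U x hU).trans hsmall
  · rw [le_div_iff₀ hm, mul_comm] at hx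
    rw [div_lt_iff₀ (by positivity), mul_comm] at hlarge
    have hprod : (m * x - U) * ((m + 1) * x - U) ≤ 0 :=
      mul_nonpos_of_nonpos_of_nonneg (by linarith) (by linarith)
    have key : (m + 1) * (x * U - x ^ 2) ≤ U * U := by nlinarith
    calc x * (1 - x / U) = (x * U - x ^ 2) / U := by field_simp
      _ ≤ U / (m + 1) := by rw [div_le_div_iff₀ hU (by positivity)]; linarith

theorem barron_lemma_general (U : ℝ) (hU : 0 < U) (a : ℕ → ℝ)
    (h0 : a 0 ≤ U)
    (hrec : ∀ n, 0 < n → a n ≤ a (n - 1) * (1 - a (n - 1) / U)) :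
    ∀ n, a n ≤ U / (n + 1) := by
  intro n
  induction n with
  | zero => simpa using h0
  | succ n ih =>
    calc a (n + 1) ≤ a n * (1 - a n / U) := hrec (n + 1) n.succ_pos
      _ ≤ U / ((n + 1 : ℝ) + 1) := mul_one_sub_div_le_div_add_one hU n.cast_add_one_pos ih
      _ = U / ((n + 1 : ℕ) + 1) := by push_cast; rfl

/-- Barron's recursive sequence lemma (Lemma 1). -/
theorem barron_lemma (U : ℝ) (hU : 0 < U) (a : ℕ → ℝ)
    (hnn : ∀ n, 0 ≤ a n)
    (hdec : ∀ n, a (n + 1) ≤ a n)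
    (h0 : a 0 ≤ U)
    (hrec : ∀ n, 0 < n → a n ≤ a (n - 1) * (1 - a (n - 1) / U)) :
    ∀ n, a n ≤ U / (n + 1) :=
  barron_lemma_general U hU a h0 hrec
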